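/- arXiv:2510.14153 — 2 statements merged into one kernel-verified Lean document; each statement's English description precedes it below -/
import Mathlib

section
/- For any even integer m ≥ 2, any s > 0, and any real y, the inverse Fourier-type integral ∫_{ℝ} cos(λy) · exp(-sλ^m) dλ equals (2√π / (m · s^{1/m})) · Σ_{k=0}^∞ [Γ(1/m + 2k/m) / (k! · Γ(1/2 + k))] · (-y²/(4 s^{2/m}))^k, and this series converges absolutely. -/
/-!
Expanding `cos (λ y) = ∑ (-1)ᵏ (λ y)²ᵏ / (2k)!` turns the integral into a series of even moments
`∫ λ²ᵏ exp (-s λᵐ) = (2 / m) s^(-(2k+1)/m) Γ((2k+1)/m)` (substitute `u = λᵐ` on the half-line), and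
Legendre's duplication formula `(2k)! = 4ᵏ k! Γ(k + 1/2) / √π` rewrites each term as the Fox–Wright
term. The series of absolute values of the integrands sums to `cosh (λ y) exp (-s λᵐ)`, which is
dominated by a Gaussian because `m ≥ 2`; dominated convergence therefore both justifies the
termwise integration and, applied to the absolute values, gives absolute convergence.
-/

open MeasureTheory Real
open scoped Nat

lemma Real.cosh_le_exp_abs (x : ℝ) : cosh x ≤ exp |x| := by
  rw [← cosh_abs, cosh_eq]
  linarith [exp_le_exp.2 (show -|x| ≤ |x| by linarith [abs_nonneg x])]

lemma Real.factorial_mul_Gamma_one_half_add (k : ℕ) :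
    k ! * Gamma (1 / 2 + k) = √π * (2 * k)! / 4 ^ k := by
  have h := Gamma_mul_Gamma_add_half (k + 1 / 2)
  rw [show (k : ℝ) + 1 / 2 + 1 / 2 = k + 1 by ring,
    show 2 * ((k : ℝ) + 1 / 2) = (2 * k : ℕ) + 1 by push_cast; ring,
    Gamma_nat_eq_factorial, Gamma_nat_eq_factorial,
    show 1 - (((2 * k : ℕ) : ℝ) + 1) = -(2 * k : ℕ) by ring,
    rpow_neg zero_le_two, rpow_natCast, pow_mul] at h
  rw [add_comm, mul_comm, h]
  norm_num
  ring

variable {m : ℕ} {s : ℝ}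

lemma sq_le_one_add_pow_of_even (hm : Even m) (hm2 : 2 ≤ m) (x : ℝ) : x ^ 2 ≤ 1 + x ^ m := by
  rcases le_total |x| 1 with hx | hx
  · nlinarith [hm.pow_nonneg x, sq_abs x, abs_nonneg x]
  · have := pow_le_pow_right₀ hx hm2
    rw [hm.pow_abs, sq_abs] at this
    linarith

lemma integrable_cosh_mul_exp_neg_mul_pow (hm : Even m) (hm2 : 2 ≤ m) (hs : 0 < s) (y : ℝ) :
    Integrable fun x : ℝ => cosh (x * y) * exp (-s * x ^ m) := by
  refine ((integrable_exp_neg_mul_sq (half_pos hs)).const_mul (exp (y ^ 2 / (2 * s) + s))).mono'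
    (by fun_prop) (Filter.Eventually.of_forall fun x => ?_)
  have hexponent : |x * y| - s * x ^ m ≤ y ^ 2 / (2 * s) + s + -(s / 2) * x ^ 2 := by
    have hAMGM : |x * y| ≤ y ^ 2 / (2 * s) + s / 2 * x ^ 2 := by
      have hplus : (s * x + y) ^ 2 / (2 * s) = y ^ 2 / (2 * s) + s / 2 * x ^ 2 + x * y := by
        field_simp; ring
      have hminus : (s * x - y) ^ 2 / (2 * s) = y ^ 2 / (2 * s) + s / 2 * x ^ 2 - x * y := by
        field_simp; ring
      rw [abs_le]
      constructor <;> linarith [div_nonneg (sq_nonneg (s * x + y)) (by positivity : 0 ≤ 2 * s),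
        div_nonneg (sq_nonneg (s * x - y)) (by positivity : 0 ≤ 2 * s)]
    nlinarith [sq_le_one_add_pow_of_even hm hm2 x]
  rw [norm_of_nonneg (by positivity), ← exp_add]
  calc cosh (x * y) * exp (-s * x ^ m) ≤ exp |x * y| * exp (-s * x ^ m) := by
        gcongr; exact cosh_le_exp_abs _
    _ ≤ exp (y ^ 2 / (2 * s) + s + -(s / 2) * x ^ 2) := by
        rw [← exp_add, exp_le_exp]; linarith

lemma integral_pow_mul_exp_neg_mul_pow (hm : Even m) (hm0 : m ≠ 0) (hs : 0 < s) {n : ℕ}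
    (hn : Even n) :
    ∫ x : ℝ, x ^ n * exp (-s * x ^ m) = 2 / m * s ^ (-(n + 1 : ℝ) / m) * Gamma ((n + 1) / m) := by
  have heven : (fun x : ℝ => x ^ n * exp (-s * x ^ m)) =
      fun x => (fun u : ℝ => u ^ (n : ℝ) * exp (-s * u ^ (m : ℝ))) |x| := by
    ext x
    simp only [rpow_natCast, hn.pow_abs, hm.pow_abs]
  rw [heven, integral_comp_abs (f := fun u : ℝ => u ^ (n : ℝ) * exp (-s * u ^ (m : ℝ))),
    integral_rpow_mul_exp_neg_mul_rpow (by positivity) (by linarith [n.cast_nonneg (α := ℝ)]) hs]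
  ring

lemma mul_foxWright_term_eq (hm0 : m ≠ 0) (hs : 0 < s) (y : ℝ) (k : ℕ) :
    2 * √π / (m * s ^ ((1 : ℝ) / m)) * (Gamma (1 / m + 2 * k / m) / (k ! * Gamma (1 / 2 + k)) *
      (-y ^ 2 / (4 * s ^ ((2 : ℝ) / m))) ^ k) =
    (-1) ^ k * y ^ (2 * k) / (2 * k)! *
      (2 / m * s ^ (-(((2 * k : ℕ) : ℝ) + 1) / m) * Gamma ((((2 * k : ℕ) : ℝ) + 1) / m)) := by
  have hspow : s ^ (-(((2 * k : ℕ) : ℝ) + 1) / m) =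
      (s ^ ((1 : ℝ) / m))⁻¹ * ((s ^ ((2 : ℝ) / m)) ^ k)⁻¹ := by
    rw [← rpow_natCast (s ^ ((2 : ℝ) / m)) k, ← rpow_mul hs.le, ← rpow_neg hs.le,
      ← rpow_neg hs.le, ← rpow_add hs]
    congr 1
    push_cast
    ring
  rw [factorial_mul_Gamma_one_half_add, hspow, div_pow, mul_pow, neg_pow, pow_mul,
    show (((2 * k : ℕ) : ℝ) + 1) / m = 1 / m + 2 * k / m by push_cast; ring]
  have : 0 < s ^ ((1 : ℝ) / m) := by positivity
  have : 0 < s ^ ((2 : ℝ) / m) := by positivity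
  field_simp

lemma hasSum_cos_mul (x y c : ℝ) :
    HasSum (fun k => (-1) ^ k * y ^ (2 * k) / (2 * k)! * (x ^ (2 * k) * c)) (cos (x * y) * c) := by
  refine ((hasSum_cos (x * y)).mul_right c).congr_fun fun k => ?_
  rw [mul_pow]
  ring

lemma hasSum_cosh_mul (x y c : ℝ) :
    HasSum (fun k => y ^ (2 * k) / (2 * k)! * (x ^ (2 * k) * c)) (cosh (x * y) * c) := by
  refine ((hasSum_cosh (x * y)).mul_right c).congr_fun fun k => ?_
  rw [mul_pow]
  ring

lemma hasSum_integral_of_hasSum_norm {ι α E : Type*} [Countable ι] [MeasurableSpace α]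
    {μ : Measure α} [NormedAddCommGroup E] [NormedSpace ℝ E] {f : ι → α → E} {F : α → E}
    {G : α → ℝ}
    (hf : ∀ k, AEStronglyMeasurable (f k) μ) (hG : Integrable G μ)
    (hfG : ∀ x, HasSum (fun k => ‖f k x‖) (G x)) (hfF : ∀ x, HasSum (fun k => f k x) (F x)) :
    HasSum (fun k => ∫ x, f k x ∂μ) (∫ x, F x ∂μ) :=
  hasSum_integral_of_dominated_convergence (fun k x => ‖f k x‖) hf
    (fun _ => ae_of_all _ fun _ => le_rfl) (ae_of_all _ fun x => (hfG x).summable)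
    (hG.congr (ae_of_all _ fun x => (hfG x).tsum_eq.symm)) (ae_of_all _ hfF)

lemma summable_abs_and_hasSum_integral_cos_mul_exp_neg_mul_pow (hm : Even m) (hm2 : 2 ≤ m)
    (hs : 0 < s) (y : ℝ) :
    (Summable fun k => |(-1) ^ k * y ^ (2 * k) / (2 * k)! * ∫ x, x ^ (2 * k) * exp (-s * x ^ m)|) ∧
    HasSum (fun k => (-1) ^ k * y ^ (2 * k) / (2 * k)! * ∫ x, x ^ (2 * k) * exp (-s * x ^ m))
      (∫ x, cos (x * y) * exp (-s * x ^ m)) := by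
  set f : ℕ → ℝ → ℝ :=
    fun k x => (-1) ^ k * y ^ (2 * k) / (2 * k)! * (x ^ (2 * k) * exp (-s * x ^ m))
  have hnorm : ∀ k x, ‖f k x‖ = y ^ (2 * k) / (2 * k)! * (x ^ (2 * k) * exp (-s * x ^ m)) := by
    intro k x
    simp only [f, norm_mul, norm_div, norm_pow, norm_neg, norm_one, one_pow, one_mul,
      Real.norm_eq_abs, Nat.abs_cast, (even_two_mul k).pow_abs, abs_of_pos (exp_pos _)]
  have hmeas : ∀ k, AEStronglyMeasurable (f k) := fun k => by fun_prop
  have hG := integrable_cosh_mul_exp_neg_mul_pow hm hm2 hs y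
  have hfG : ∀ x, HasSum (fun k => ‖f k x‖) (cosh (x * y) * exp (-s * x ^ m)) := fun x => by
    simpa only [hnorm] using hasSum_cosh_mul x y _
  constructor
  · have := hasSum_integral_of_hasSum_norm (fun k => (hmeas k).norm) hG
      (by simpa only [norm_norm] using hfG) hfG
    refine this.summable.congr fun k => ?_
    have hmoment : 0 ≤ ∫ x, x ^ (2 * k) * exp (-s * x ^ m) :=
      integral_nonneg fun x => mul_nonneg ((even_two_mul k).pow_nonneg x) (exp_pos _).le
    simp only [hnorm, integral_const_mul, abs_mul, abs_div, abs_pow, abs_neg, abs_one, one_pow,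
      one_mul, Nat.abs_cast, abs_of_nonneg hmoment, (even_two_mul k).pow_abs]
  · simp_rw [← integral_const_mul]
    exact hasSum_integral_of_hasSum_norm hmeas hG hfG fun x => hasSum_cos_mul x y _

theorem fourier_generalized_gaussian_foxwright (m : ℕ) (hm : Even m) (hm2 : 2 ≤ m)
    (s y : ℝ) (hs : 0 < s) :
    Summable (fun k : ℕ =>
      |Real.Gamma (1 / m + 2 * k / m) / (k.factorial * Real.Gamma (1 / 2 + k)) *
        (-y ^ 2 / (4 * s ^ ((2 : ℝ) / m))) ^ k|) ∧
    ∫ lam : ℝ, Real.cos (lam * y) * Real.exp (-s * lam ^ m) =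
      (2 * Real.sqrt π / (m * s ^ ((1 : ℝ) / m))) *
        ∑' k : ℕ, Real.Gamma (1 / m + 2 * k / m) / (k.factorial * Real.Gamma (1 / 2 + k)) *
          (-y ^ 2 / (4 * s ^ ((2 : ℝ) / m))) ^ k := by
  have hm0 : m ≠ 0 := by omega
  have hF : 0 < 2 * √π / (m * s ^ ((1 : ℝ) / m)) := by positivity
  obtain ⟨habs, hsum⟩ := summable_abs_and_hasSum_integral_cos_mul_exp_neg_mul_pow hm hm2 hs y
  simp_rw [integral_pow_mul_exp_neg_mul_pow hm hm0 hs (even_two_mul _),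
    ← mul_foxWright_term_eq hm0 hs] at habs hsum
  refine ⟨(summable_mul_left_iff hF.ne').1 (habs.congr fun k => ?_), ?_⟩
  · rw [abs_mul, abs_of_pos hF]
  · rw [← hsum.tsum_eq, tsum_mul_left]
end

section
/- For κ ∈ (0,1), the function θ_κ defined on (0,∞) by θ_κ(u) = 1 - (c₁(κ)/c₂(κ)) K_{(κ-1)/2}(u) u^{(1-κ)/2}, where c₁(κ) = 2^{(1-κ)/2}/(√π Γ(κ/2)) and c₂(κ) = 1/(2Γ(κ)cos(κπ/2)), satisfies |θ_κ(u)| ≤ 1 for all u > 0 and θ_κ(u) → 0 as u → 0⁺. -/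
open MeasureTheory Real Filter

/-- Modified Bessel function of the second kind, via its integral representation. -/
noncomputable def besselK (ν z : ℝ) : ℝ :=
  ∫ t in Set.Ioi (0 : ℝ), Real.exp (-z * Real.cosh t) * Real.cosh (ν * t)

/-- `c₁(κ) = 2^((1-κ)/2) / (√π Γ(κ/2))`. -/
noncomputable def c1 (κ : ℝ) : ℝ := 2 ^ ((1 - κ) / 2) / (Real.sqrt π * Real.Gamma (κ / 2))

/-- `c₂(κ) = 1 / (2 Γ(κ) cos(κπ/2))`. -/
noncomputable def c2 (κ : ℝ) : ℝ := 1 / (2 * Real.Gamma κ * Real.cos (κ * π / 2))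

/-! With `a = (1 - κ) / 2` and `K_{-a} = K_a`, the substitution `s = (u / 2) eᵗ` turns the
integral defining `K_a` into `u ^ a K_a(u) = 2 ^ (a - 1) ∫₀^∞ e^(-s - u² / (4s)) s ^ (a - 1) ds`,
while the duplication and reflection formulas for `Γ` give `(c₁ / c₂) 2 ^ (a - 1) Γ(a) = 1`.
Hence `1 - θ_κ(u)` is this integral divided by `Γ(a)`: it lies in `[0, 1]` because the integrand
is dominated by the Gamma integrand `e^(-s) s ^ (a - 1)`, and it tends to `1` as `u → 0⁺` by
dominated convergence. -/

open Set Topology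

noncomputable def dampedGamma (a c : ℝ) : ℝ :=
  ∫ s in Ioi 0, exp (-s - c ^ 2 / s) * s ^ (a - 1)

lemma dampedGamma_integrand_le (a c : ℝ) {s : ℝ} (hs : 0 < s) :
    exp (-s - c ^ 2 / s) * s ^ (a - 1) ≤ exp (-s) * s ^ (a - 1) := by
  gcongr
  have : 0 ≤ c ^ 2 / s := by positivity
  linarith

lemma continuousOn_dampedGamma_integrand (a c : ℝ) :
    ContinuousOn (fun s => exp (-s - c ^ 2 / s) * s ^ (a - 1)) (Ioi 0) := by
  fun_prop (disch := exact fun s hs => (mem_Ioi.mp hs).ne')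

lemma integrableOn_dampedGamma_integrand {a : ℝ} (ha : 0 < a) (c : ℝ) :
    IntegrableOn (fun s => exp (-s - c ^ 2 / s) * s ^ (a - 1)) (Ioi 0) := by
  refine (GammaIntegral_convergent ha).mono'
    ((continuousOn_dampedGamma_integrand a c).aestronglyMeasurable measurableSet_Ioi) ?_
  filter_upwards [ae_restrict_mem measurableSet_Ioi] with s (hs : 0 < s)
  rw [norm_of_nonneg (by positivity)]
  exact dampedGamma_integrand_le a c hs

lemma dampedGamma_nonneg (a c : ℝ) : 0 ≤ dampedGamma a c :=
  setIntegral_nonneg measurableSet_Ioi fun s (hs : 0 < s) => by positivity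

lemma dampedGamma_le_Gamma {a : ℝ} (ha : 0 < a) (c : ℝ) : dampedGamma a c ≤ Gamma a := by
  rw [Gamma_eq_integral ha]
  exact setIntegral_mono_on (integrableOn_dampedGamma_integrand ha c)
    (GammaIntegral_convergent ha) measurableSet_Ioi fun s hs => dampedGamma_integrand_le a c hs

lemma tendsto_dampedGamma_zero {a : ℝ} (ha : 0 < a) :
    Tendsto (dampedGamma a) (𝓝 0) (𝓝 (Gamma a)) := by
  rw [Gamma_eq_integral ha]
  refine tendsto_integral_filter_of_dominated_convergence _
    (Eventually.of_forall fun c =>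
      (continuousOn_dampedGamma_integrand a c).aestronglyMeasurable measurableSet_Ioi)
    (Eventually.of_forall fun c => ?_) (GammaIntegral_convergent ha) ?_
  · filter_upwards [ae_restrict_mem measurableSet_Ioi] with s (hs : 0 < s)
    rw [norm_of_nonneg (by positivity)]
    exact dampedGamma_integrand_le a c hs
  · filter_upwards with s
    have hcont : Continuous fun c : ℝ => exp (-s - c ^ 2 / s) * s ^ (a - 1) := by fun_prop
    simpa using hcont.tendsto 0

lemma image_const_mul_exp {c : ℝ} (hc : 0 < c) : (fun t => c * exp t) '' univ = Ioi 0 := by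
  rw [← image_image (c * ·) exp, image_univ, range_exp, image_const_mul_Ioi_zero hc]

lemma abs_mul_dampedGamma_integrand_comp (a : ℝ) {u : ℝ} (hu : 0 < u) (t : ℝ) :
    |u / 2 * exp t| * (exp (-(u / 2 * exp t) - (u / 2) ^ 2 / (u / 2 * exp t)) *
      (u / 2 * exp t) ^ (a - 1)) = (u / 2) ^ a * (exp (-u * cosh t) * exp (a * t)) := by
  have hc : 0 < u / 2 := by positivity
  have hct : 0 < u / 2 * exp t := by positivity
  have hpow : (u / 2 * exp t) ^ (a - 1) * (u / 2 * exp t) = (u / 2) ^ a * exp (a * t) := by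
    rw [← rpow_add_one hct.ne', sub_add_cancel, mul_rpow hc.le (exp_pos t).le, ← exp_mul,
      mul_comm t]
  have hcosh : -(u / 2 * exp t) - (u / 2) ^ 2 / (u / 2 * exp t) = -u * cosh t := by
    rw [cosh_eq, exp_neg]
    field_simp
    ring
  rw [abs_of_pos hct, hcosh]
  linear_combination exp (-u * cosh t) * hpow

lemma integral_exp_neg_mul_cosh_mul_exp (a : ℝ) {u : ℝ} (hu : 0 < u) :
    (u / 2) ^ a * ∫ t, exp (-u * cosh t) * exp (a * t) = dampedGamma a (u / 2) := by
  have hc : 0 < u / 2 := by positivity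
  rw [dampedGamma, ← image_const_mul_exp hc, integral_image_eq_integral_abs_deriv_smul
    MeasurableSet.univ (fun t _ => ((hasDerivAt_exp t).const_mul (u / 2)).hasDerivWithinAt)
    (fun x _ y _ h => exp_injective (mul_left_cancel₀ hc.ne' h)), Measure.restrict_univ,
    ← integral_const_mul]
  simp_rw [smul_eq_mul, abs_mul_dampedGamma_integrand_comp a hu]

lemma integrable_exp_neg_mul_cosh_mul_exp {a u : ℝ} (ha : 0 < a) (hu : 0 < u) :
    Integrable fun t => exp (-u * cosh t) * exp (a * t) := by
  have hc : 0 < u / 2 := by positivity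
  have h := integrableOn_dampedGamma_integrand ha (u / 2)
  rw [← image_const_mul_exp hc, integrableOn_image_iff_integrableOn_abs_deriv_smul
    MeasurableSet.univ (fun t _ => ((hasDerivAt_exp t).const_mul (u / 2)).hasDerivWithinAt)
    (fun x _ y _ h => exp_injective (mul_left_cancel₀ hc.ne' h)), integrableOn_univ] at h
  simp_rw [smul_eq_mul, abs_mul_dampedGamma_integrand_comp a hu] at h
  exact (integrable_const_mul_iff (rpow_pos_of_pos hc a).ne'.isUnit _).mp h

lemma integral_Ioi_add_comp_neg {E : Type*} [NormedAddCommGroup E] [NormedSpace ℝ E]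
    {f : ℝ → E} (hf : Integrable f) : ∫ t in Ioi 0, (f t + f (-t)) = ∫ t, f t := by
  rw [integral_add hf.integrableOn hf.comp_neg.integrableOn, integral_comp_neg_Ioi, neg_zero,
    add_comm, intervalIntegral.integral_Iic_add_Ioi hf.integrableOn hf.integrableOn]

lemma besselK_neg (ν z : ℝ) : besselK (-ν) z = besselK ν z := by
  simp only [besselK, neg_mul, cosh_neg]

lemma rpow_mul_besselK {a u : ℝ} (ha : 0 < a) (hu : 0 < u) :
    u ^ a * besselK a u = 2 ^ (a - 1) * dampedGamma a (u / 2) := by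
  have hsym : besselK a u = (∫ t, exp (-u * cosh t) * exp (a * t)) / 2 := by
    rw [← integral_Ioi_add_comp_neg (integrable_exp_neg_mul_cosh_mul_exp ha hu), besselK,
      ← integral_div]
    refine setIntegral_congr_fun measurableSet_Ioi fun t _ => ?_
    rw [cosh_neg, cosh_eq (a * t), mul_neg]
    ring
  have hu2 : u ^ a = 2 ^ (a - 1) * 2 * (u / 2) ^ a := by
    rw [← rpow_add_one two_ne_zero, sub_add_cancel, ← mul_rpow zero_le_two (by positivity),
      mul_div_cancel₀ u two_ne_zero]
  rw [hsym, hu2, ← integral_exp_neg_mul_cosh_mul_exp a hu]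
  ring

lemma c1_div_c2_mul_two_rpow_mul_Gamma {κ : ℝ} (hκ : κ ∈ Ioo (0 : ℝ) 1) :
    c1 κ / c2 κ * (2 ^ ((1 - κ) / 2 - 1) * Gamma ((1 - κ) / 2)) = 1 := by
  obtain ⟨hκ0, hκ1⟩ := hκ
  have hcos : 0 < cos (κ * π / 2) :=
    cos_pos_of_mem_Ioo ⟨by nlinarith [pi_pos], by nlinarith [pi_pos]⟩
  have hΓsucc : 0 < Gamma ((κ + 1) / 2) := Gamma_pos_of_pos (by linarith)
  have hduplication : Gamma (κ / 2) * Gamma ((κ + 1) / 2) = Gamma κ * 2 ^ (1 - κ) * √π := by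
    have := Gamma_mul_Gamma_add_half (κ / 2)
    rwa [show κ / 2 + 1 / 2 = (κ + 1) / 2 by ring, mul_div_cancel₀ κ two_ne_zero] at this
  have hreflection : Gamma ((κ + 1) / 2) * Gamma ((1 - κ) / 2) * cos (κ * π / 2) = π := by
    have := Gamma_mul_Gamma_one_sub ((κ + 1) / 2)
    rw [show 1 - (κ + 1) / 2 = (1 - κ) / 2 by ring,
      show π * ((κ + 1) / 2) = κ * π / 2 + π / 2 by ring, sin_add_pi_div_two] at this
    rw [this, div_mul_cancel₀ π hcos.ne']
  have hy : (2 : ℝ) ^ (1 - κ) = (2 ^ ((1 - κ) / 2)) ^ 2 := by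
    rw [← rpow_natCast, ← rpow_mul zero_le_two]; norm_num
  rw [c1, c2, rpow_sub_one two_ne_zero]
  field_simp
  rw [hy] at hduplication
  refine mul_right_cancel₀ hΓsucc.ne' ?_
  linear_combination (2 ^ ((1 - κ) / 2)) ^ 2 * Gamma κ * (hreflection - mul_self_sqrt pi_pos.le)
    - √π * hduplication

lemma c1_div_c2_mul_besselK_mul_rpow {κ u : ℝ} (hκ : κ ∈ Ioo (0 : ℝ) 1) (hu : 0 < u) :
    c1 κ / c2 κ * besselK ((κ - 1) / 2) u * u ^ ((1 - κ) / 2) =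
      dampedGamma ((1 - κ) / 2) (u / 2) / Gamma ((1 - κ) / 2) := by
  have ha : 0 < (1 - κ) / 2 := by linarith [hκ.2]
  have hΓ : Gamma ((1 - κ) / 2) ≠ 0 := (Gamma_pos_of_pos ha).ne'
  rw [eq_div_iff hΓ, show (κ - 1) / 2 = -((1 - κ) / 2) by ring, besselK_neg]
  linear_combination c1 κ / c2 κ * Gamma ((1 - κ) / 2) * rpow_mul_besselK ha hu
    + dampedGamma ((1 - κ) / 2) (u / 2) * c1_div_c2_mul_two_rpow_mul_Gamma hκ

theorem theta_bounded_and_vanishes (κ : ℝ) (hκ : κ ∈ Set.Ioo (0 : ℝ) 1) :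
    (∀ u : ℝ, 0 < u →
      |1 - (c1 κ / c2 κ) * besselK ((κ - 1) / 2) u * u ^ ((1 - κ) / 2)| ≤ 1) ∧
    Tendsto (fun u : ℝ => 1 - (c1 κ / c2 κ) * besselK ((κ - 1) / 2) u * u ^ ((1 - κ) / 2))
      (nhdsWithin 0 (Set.Ioi 0)) (nhds 0) := by
  have ha : 0 < (1 - κ) / 2 := by linarith [hκ.2]
  have hΓ := Gamma_pos_of_pos ha
  refine ⟨fun u hu => ?_, ?_⟩
  · rw [c1_div_c2_mul_besselK_mul_rpow hκ hu, abs_le]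
    have := div_le_one_of_le₀ (dampedGamma_le_Gamma ha (u / 2)) hΓ.le
    have := div_nonneg (dampedGamma_nonneg ((1 - κ) / 2) (u / 2)) hΓ.le
    constructor <;> linarith
  · have hhalf : Tendsto (fun u : ℝ => u / 2) (𝓝[>] 0) (𝓝 0) :=
      ((continuous_id.div_const (2 : ℝ)).tendsto' 0 0 (zero_div 2)).mono_left nhdsWithin_le_nhds
    have hlim := ((tendsto_dampedGamma_zero ha).comp hhalf).div_const (Gamma ((1 - κ) / 2))
    rw [div_self hΓ.ne'] at hlim
    have hθ := (tendsto_const_nhds (x := (1 : ℝ))).sub hlim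
    rw [sub_self] at hθ
    refine hθ.congr' ?_
    filter_upwards [self_mem_nhdsWithin] with u hu
    rw [c1_div_c2_mul_besselK_mul_rpow hκ hu, Function.comp_apply]
end
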